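/- Let ξ̄ > 0 and L > 0. Suppose g : ℝ → ℝ is Lipschitz continuous with constant L and Ū : [0,ξ̄] → ℝ is continuous and bounded. Then for any two bounded continuous functions U, V : [0,∞)×[0,ξ̄] → ℝ one has ‖𝒯U − 𝒯V‖_* ≤ (1/2)‖U − V‖_*, i.e. the transformation 𝒯 is a strict contraction with contraction constant 1/2 in the weighted norm. -/

import Mathlib

open MeasureTheory Set Real

/-!
By the Lipschitz bound, `|g (U s η) - g (V s η)| ≤ L e^{L ξ̄ s} ‖U - V‖_*`. Integrating over
`η ∈ [0, ξ] ⊆ [0, ξ̄]` costs a factor `ξ̄`, and then `∫₀^t L ξ̄ e^{L ξ̄ s} ds = e^{L ξ̄ t} - 1`, so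
`e^{-L ξ̄ t} |𝒯U - 𝒯V| ≤ (1/2)(1 - e^{-L ξ̄ t}) ‖U - V‖_*`: the weight absorbs the growth of
the double integral and only the prefactor `1/2` survives.
-/

/-- The Picard-type transformation `(𝒯U)(t,ξ) = Ū(ξ) + (1/2)∫₀^t ∫₀^ξ g(U(s,η)) dη ds`. -/
noncomputable def asympT (Ubar : ℝ → ℝ) (g : ℝ → ℝ) (W : ℝ → ℝ → ℝ) (t ξ : ℝ) : ℝ :=
  Ubar ξ + (1 / 2) * ∫ s in (0:ℝ)..t, ∫ η in (0:ℝ)..ξ, g (W s η)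

/-- The weighted norm `‖U‖_* = sup_{t ≥ 0, ξ ∈ [0,ξ̄]} e^{-Lξ̄t} |U(t,ξ)|`. -/
noncomputable def wnorm (ξbar L : ℝ) (W : ℝ → ℝ → ℝ) : ℝ :=
  sSup {r : ℝ | ∃ t ξ : ℝ, 0 ≤ t ∧ ξ ∈ Set.Icc 0 ξbar ∧
    r = Real.exp (-(L * ξbar * t)) * |W t ξ|}

theorem ContinuousOn.exists_continuous_eqOn {X : Type*} [TopologicalSpace X] [NormalSpace X]
    {f : X → ℝ} {s : Set X} (hs : IsClosed s) (hf : ContinuousOn f s) :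
    ∃ F : X → ℝ, Continuous F ∧ EqOn F f s := by
  obtain ⟨F, hF⟩ := ContinuousMap.exists_restrict_eq hs ⟨s.domRestrict f, hf.domRestrict⟩
  exact ⟨F, F.continuous, fun x hx => ContinuousMap.congr_fun hF ⟨x, hx⟩⟩

theorem ContinuousOn.continuousOn_intervalIntegral {f : ℝ → ℝ → ℝ} {a b c d : ℝ}
    (hf : ContinuousOn (Function.uncurry f) (uIcc a b ×ˢ uIcc c d)) :
    ContinuousOn (fun s => ∫ η in c..d, f s η) (uIcc a b) := by
  obtain ⟨F, hFc, hFf⟩ := hf.exists_continuous_eqOn (isClosed_Icc.prod isClosed_Icc)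
  refine (intervalIntegral.continuous_parametric_intervalIntegral_of_continuous'
    (μ := volume) (f := fun s η => F (s, η)) hFc c d).continuousOn.congr fun s hs => ?_
  exact intervalIntegral.integral_congr fun η hη => (hFf (mk_mem_prod hs hη)).symm

theorem intervalIntegral_intervalIntegral_sub {f₁ f₂ : ℝ → ℝ → ℝ} {a b c d : ℝ}
    (hf₁ : ContinuousOn (Function.uncurry f₁) (uIcc a b ×ˢ uIcc c d))
    (hf₂ : ContinuousOn (Function.uncurry f₂) (uIcc a b ×ˢ uIcc c d)) :
    ∫ s in a..b, ∫ η in c..d, (f₁ s η - f₂ s η) =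
      (∫ s in a..b, ∫ η in c..d, f₁ s η) - ∫ s in a..b, ∫ η in c..d, f₂ s η := by
  have slice {f : ℝ → ℝ → ℝ} (hf : ContinuousOn (Function.uncurry f) (uIcc a b ×ˢ uIcc c d))
      {s : ℝ} (hs : s ∈ uIcc a b) : IntervalIntegrable (f s) volume c d :=
    (hf.comp (continuous_const.prodMk continuous_id).continuousOn
      fun η hη => ⟨hs, hη⟩).intervalIntegrable
  rw [← intervalIntegral.integral_sub hf₁.continuousOn_intervalIntegral.intervalIntegrable
    hf₂.continuousOn_intervalIntegral.intervalIntegrable]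
  exact intervalIntegral.integral_congr fun s hs =>
    intervalIntegral.integral_sub (slice hf₁ hs) (slice hf₂ hs)

theorem integral_mul_exp_mul (c a b : ℝ) :
    ∫ s in a..b, c * exp (c * s) = exp (c * b) - exp (c * a) := by
  refine intervalIntegral.integral_eq_sub_of_hasDerivAt (f := fun s => exp (c * s))
    (fun s _ => ?_)
    ((by fun_prop : Continuous fun s => c * exp (c * s)).intervalIntegrable a b)
  simpa [mul_comm] using ((hasDerivAt_id s).const_mul c).exp

theorem asympT_sub_asympT {Ubar g : ℝ → ℝ} {U V : ℝ → ℝ → ℝ} {t ξ : ℝ} (hg : Continuous g)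
    (hU : ContinuousOn (Function.uncurry U) (uIcc 0 t ×ˢ uIcc 0 ξ))
    (hV : ContinuousOn (Function.uncurry V) (uIcc 0 t ×ˢ uIcc 0 ξ)) :
    asympT Ubar g U t ξ - asympT Ubar g V t ξ =
      1 / 2 * ∫ s in (0:ℝ)..t, ∫ η in (0:ℝ)..ξ, (g (U s η) - g (V s η)) := by
  rw [intervalIntegral_intervalIntegral_sub (f₁ := fun s η => g (U s η))
    (f₂ := fun s η => g (V s η)) (hg.comp_continuousOn hU) (hg.comp_continuousOn hV),
    asympT, asympT]
  ring

theorem abs_intervalIntegral_intervalIntegral_le {h : ℝ → ℝ → ℝ} {L ξbar N t ξ : ℝ}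
    (hL : 0 ≤ L) (hN : 0 ≤ N) (ht : 0 ≤ t) (hξ : ξ ∈ Icc 0 ξbar)
    (hh : ∀ s ∈ Icc 0 t, ∀ η ∈ Icc 0 ξ, |h s η| ≤ L * (exp (L * ξbar * s) * N)) :
    |∫ s in (0:ℝ)..t, ∫ η in (0:ℝ)..ξ, h s η| ≤ N * (exp (L * ξbar * t) - 1) := by
  have inner : ∀ s ∈ Ioc 0 t,
      ‖∫ η in (0:ℝ)..ξ, h s η‖ ≤ N * (L * ξbar * exp (L * ξbar * s)) := by
    intro s hs
    calc ‖∫ η in (0:ℝ)..ξ, h s η‖ ≤ L * (exp (L * ξbar * s) * N) * |ξ - 0| :=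
          intervalIntegral.norm_integral_le_of_norm_le_const fun η hη =>
            hh s (Ioc_subset_Icc_self hs) η (Ioc_subset_Icc_self (uIoc_of_le hξ.1 ▸ hη))
      _ = L * exp (L * ξbar * s) * N * ξ := by rw [sub_zero, abs_of_nonneg hξ.1]; ring
      _ ≤ L * exp (L * ξbar * s) * N * ξbar := by gcongr; exact hξ.2
      _ = N * (L * ξbar * exp (L * ξbar * s)) := by ring
  calc |∫ s in (0:ℝ)..t, ∫ η in (0:ℝ)..ξ, h s η|
      ≤ ∫ s in (0:ℝ)..t, N * (L * ξbar * exp (L * ξbar * s)) :=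
        intervalIntegral.norm_integral_le_of_norm_le ht (ae_of_all _ inner)
          ((by fun_prop : Continuous fun s => N * (L * ξbar * exp (L * ξbar * s))).intervalIntegrable
            _ _)
    _ = N * (exp (L * ξbar * t) - 1) := by
        rw [intervalIntegral.integral_const_mul, integral_mul_exp_mul, mul_zero, exp_zero]

section WeightedNorm

variable {ξbar L : ℝ} {W : ℝ → ℝ → ℝ}

theorem wnorm_nonneg : 0 ≤ wnorm ξbar L W :=
  Real.sSup_nonneg fun _ ⟨_, _, _, _, hr⟩ => hr ▸ by positivity

theorem wnorm_le {C : ℝ} (hC : 0 ≤ C)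
    (h : ∀ t ξ, 0 ≤ t → ξ ∈ Icc 0 ξbar → exp (-(L * ξbar * t)) * |W t ξ| ≤ C) :
    wnorm ξbar L W ≤ C :=
  Real.sSup_le (fun _ ⟨t, ξ, ht, hξ, hr⟩ => hr ▸ h t ξ ht hξ) hC

theorem abs_le_exp_mul_wnorm (hL : 0 ≤ L)
    (hW : ∃ M, ∀ t ξ, 0 ≤ t → ξ ∈ Icc 0 ξbar → |W t ξ| ≤ M) {t ξ : ℝ} (ht : 0 ≤ t)
    (hξ : ξ ∈ Icc 0 ξbar) : |W t ξ| ≤ exp (L * ξbar * t) * wnorm ξbar L W := by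
  obtain ⟨M, hM⟩ := hW
  have hbdd : BddAbove {r : ℝ | ∃ t ξ : ℝ, 0 ≤ t ∧ ξ ∈ Set.Icc 0 ξbar ∧
      r = Real.exp (-(L * ξbar * t)) * |W t ξ|} := by
    refine ⟨M, fun _ ⟨s, η, hs, hη, hr⟩ => hr ▸ ?_⟩
    have : exp (-(L * ξbar * s)) ≤ 1 :=
      exp_le_one_iff.2 (neg_nonpos.2 (mul_nonneg (mul_nonneg hL (hη.1.trans hη.2)) hs))
    calc exp (-(L * ξbar * s)) * |W s η| ≤ 1 * M :=
          mul_le_mul this (hM s η hs hη) (abs_nonneg _) zero_le_one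
      _ = M := one_mul M
  calc |W t ξ| = exp (L * ξbar * t) * (exp (-(L * ξbar * t)) * |W t ξ|) := by
        rw [← mul_assoc, ← exp_add, add_neg_cancel, exp_zero, one_mul]
    _ ≤ exp (L * ξbar * t) * wnorm ξbar L W := by
        gcongr
        exact le_csSup hbdd ⟨t, ξ, ht, hξ, rfl⟩

end WeightedNorm

theorem stmt0 (ξbar L : ℝ) (hL : 0 < L)
    (g : ℝ → ℝ) (hg : ∀ u v : ℝ, |g u - g v| ≤ L * |u - v|)
    (Ubar : ℝ → ℝ)
    (U V : ℝ → ℝ → ℝ)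
    (hU : ContinuousOn (Function.uncurry U) (Set.Ici 0 ×ˢ Set.Icc 0 ξbar))
    (hV : ContinuousOn (Function.uncurry V) (Set.Ici 0 ×ˢ Set.Icc 0 ξbar))
    (hUbdd : ∃ M : ℝ, ∀ t ξ : ℝ, 0 ≤ t → ξ ∈ Set.Icc (0:ℝ) ξbar → |U t ξ| ≤ M)
    (hVbdd : ∃ M : ℝ, ∀ t ξ : ℝ, 0 ≤ t → ξ ∈ Set.Icc (0:ℝ) ξbar → |V t ξ| ≤ M) :
    wnorm ξbar L (fun t ξ => asympT Ubar g U t ξ - asympT Ubar g V t ξ) ≤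
      (1 / 2) * wnorm ξbar L (fun t ξ => U t ξ - V t ξ) := by
  obtain ⟨MU, hMU⟩ := hUbdd
  obtain ⟨MV, hMV⟩ := hVbdd
  set N := wnorm ξbar L (fun t ξ => U t ξ - V t ξ)
  have hN : 0 ≤ N := wnorm_nonneg
  have hUV : ∃ M, ∀ t ξ, 0 ≤ t → ξ ∈ Icc 0 ξbar → |U t ξ - V t ξ| ≤ M :=
    ⟨MU + MV, fun t ξ ht hξ => (abs_sub _ _).trans (add_le_add (hMU t ξ ht hξ) (hMV t ξ ht hξ))⟩
  refine wnorm_le (by positivity) fun t ξ ht hξ => ?_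
  have hrect : uIcc 0 t ×ˢ uIcc 0 ξ ⊆ Ici 0 ×ˢ Icc 0 ξbar := by
    rw [uIcc_of_le ht, uIcc_of_le hξ.1]
    exact prod_mono Icc_subset_Ici_self (Icc_subset_Icc_right hξ.2)
  have hbound := abs_intervalIntegral_intervalIntegral_le hL.le hN ht hξ fun s hs η hη =>
    (hg (U s η) (V s η)).trans <| mul_le_mul_of_nonneg_left
      (abs_le_exp_mul_wnorm hL.le hUV hs.1 ⟨hη.1, hη.2.trans hξ.2⟩) hL.le
  rw [asympT_sub_asympT (LipschitzWith.of_dist_le' hg).continuous (hU.mono hrect) (hV.mono hrect),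
    abs_mul, abs_of_pos one_half_pos]
  calc exp (-(L * ξbar * t)) *
        (1 / 2 * |∫ s in (0:ℝ)..t, ∫ η in (0:ℝ)..ξ, (g (U s η) - g (V s η))|)
      ≤ exp (-(L * ξbar * t)) * (1 / 2 * (N * (exp (L * ξbar * t) - 1))) := by gcongr
    _ = 1 / 2 * N * (1 - exp (-(L * ξbar * t))) := by
        rw [exp_neg]; field_simp
    _ ≤ 1 / 2 * N :=
        mul_le_of_le_one_right (by positivity) (by linarith [exp_pos (-(L * ξbar * t))])
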